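/- arXiv:1909.07024 — 3 statements merged into one kernel-verified Lean document; each statement's English description precedes it below -/
import Mathlib

section
/- The DGA E on two generators e₁, e₂ with deg e₁ = 1, deg e₂ = 0, ∂e₁ = e₂, ∂e₂ = 0, over ℤ, has homology concentrated in degree 0 isomorphic to ℤ (generated by the class of 1); in particular every cycle in E of positive degree is a boundary. -/
/- Free unital associative ℤ-algebra on a type `X` of generators,
realized as the monoid algebra of the free monoid on `X`. -/
noncomputable section

abbrev FAlg (X : Type) : Type := MonoidAlgebra ℤ (FreeMonoid X)

/-- The generator `x` as an element of the free algebra. -/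
def fgen {X : Type} (x : X) : FAlg X :=
  MonoidAlgebra.of ℤ (FreeMonoid X) (FreeMonoid.of x)

/-- Degree of a word, given degrees of the generators. -/
def wdeg {X : Type} (deg : X → ℤ) (w : FreeMonoid X) : ℤ :=
  ((FreeMonoid.toList w).map deg).sum

/-- An element is homogeneous of degree `d` if every word in its support has degree `d`. -/
def Homog {X : Type} (deg : X → ℤ) (d : ℤ) (a : FAlg X) : Prop :=
  ∀ w ∈ a.coeff.support, wdeg deg w = d

/-- The sign `(-1)^d` for an integer degree `d`. -/
def sgn (d : ℤ) : ℤ := (((-1 : ℤˣ) ^ d : ℤˣ) : ℤ)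

/-- The signed Leibniz rule `∂(vw) = (∂v)w + (-1)^(deg v) v (∂w)` for homogeneous `v`. -/
def IsLeibniz {X : Type} (deg : X → ℤ) (D : FAlg X →ₗ[ℤ] FAlg X) : Prop :=
  ∀ (d : ℤ) (v w : FAlg X), Homog deg d v →
    D (v * w) = D v * w + sgn d • (v * D w)

/-- `D` has degree `-1`: it sends homogeneous elements of degree `d` to degree `d - 1`. -/
def LowersDeg {X : Type} (deg : X → ℤ) (D : FAlg X →ₗ[ℤ] FAlg X) : Prop :=
  ∀ (d : ℤ) (v : FAlg X), Homog deg d v → Homog deg (d - 1) (D v)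

/-- The grading of `E = ℤ⟨e₁, e₂⟩`: `deg e₁ = 1` (generator `true`) and
`deg e₂ = 0` (generator `false`). -/
def degE : Bool → ℤ := fun b => if b then 1 else 0

/-! The homology is computed by a contracting homotopy. Let `h` send a word `e₂w` to `e₁w` and
every other word to `0`, and let `ε` take the coefficient of the empty word. Every element is a
sum of a multiple of `1` and products `eᵢ z`, and on each of these the Leibniz rule gives
`∂h + h∂ + ε(-)·1 = id` and `ε∂ = 0` without any induction. So a cycle `a` equals
`ε(a)·1 + ∂(h a)`, no nonzero multiple of `1` is a boundary, and `ε a = 0` when `a` has nonzero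
degree. -/

open MonoidAlgebra

section FreeAlgebra

variable {X : Type}

theorem fgen_mul_single (x : X) (w : FreeMonoid X) (c : ℤ) :
    fgen x * single w c = single (FreeMonoid.of x * w) c := by
  rw [fgen, of_apply, single_mul_single, one_mul]

theorem FAlg.induction_on_fgen_mul {P : FAlg X → Prop} (a : FAlg X)
    (smul_one : ∀ c : ℤ, P (c • 1)) (fgen_mul : ∀ x z, P (fgen x * z))
    (add : ∀ a b, P a → P b → P (a + b)) : P a := by
  induction a using induction_linear with
  | zero => simpa using smul_one 0
  | add a b ha hb => exact add a b ha hb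
  | single w c =>
    cases w using FreeMonoid.casesOn with
    | one => simpa [one_def, smul_single'] using smul_one c
    | of_mul x u => simpa [fgen_mul_single] using fgen_mul x (single u c)

theorem homog_single_one (deg : X → ℤ) (w : FreeMonoid X) :
    Homog deg (wdeg deg w) (single w 1) := by
  intro v hv
  rw [coeff_single, Finsupp.support_single _ one_ne_zero, Finset.mem_singleton] at hv
  rw [hv]

theorem homog_one (deg : X → ℤ) : Homog deg 0 (1 : FAlg X) := by
  rw [one_def]
  simpa [wdeg] using homog_single_one deg 1

theorem homog_fgen (deg : X → ℤ) (x : X) : Homog deg (deg x) (fgen x) := by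
  rw [fgen, of_apply]
  simpa [wdeg] using homog_single_one deg (FreeMonoid.of x)

variable {deg : X → ℤ} {D : FAlg X →ₗ[ℤ] FAlg X}

theorem IsLeibniz.map_one (hD : IsLeibniz deg D) : D 1 = 0 := by
  simpa [sgn] using hD 0 1 1 (homog_one deg)

theorem IsLeibniz.map_fgen_mul (hD : IsLeibniz deg D) (x : X) (z : FAlg X) :
    D (fgen x * z) = D (fgen x) * z + sgn (deg x) • (fgen x * D z) :=
  hD _ _ _ (homog_fgen deg x)

def augmentation : FAlg X →ₗ[ℤ] ℤ := (basis (FreeMonoid X) ℤ).coord 1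

theorem augmentation_apply (a : FAlg X) : augmentation a = a.coeff 1 := rfl

theorem augmentation_one : augmentation (1 : FAlg X) = 1 := by
  simp [augmentation_apply, one_def]

theorem augmentation_fgen_mul (x : X) (z : FAlg X) : augmentation (fgen x * z) = 0 := by
  rw [augmentation_apply, fgen, of_apply]
  refine coeff_single_mul_of_forall_mul_ne _ _ fun w h => ?_
  simpa using congrArg FreeMonoid.toList h

theorem augmentation_eq_zero_of_homog {d : ℤ} {a : FAlg X} (ha : Homog deg d a) (hd : d ≠ 0) :
    augmentation a = 0 := by
  by_contra h
  exact hd (by simpa [wdeg, eq_comm] using ha 1 (Finsupp.mem_support_iff.mpr h))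

end FreeAlgebra

section Contraction

def contractWord (w : FreeMonoid Bool) : FAlg Bool :=
  FreeMonoid.casesOn w 0 fun x u => bif x then 0 else fgen true * single u 1

def contraction : FAlg Bool →ₗ[ℤ] FAlg Bool :=
  (basis (FreeMonoid Bool) ℤ).constr ℤ contractWord

theorem contraction_single (w : FreeMonoid Bool) (c : ℤ) :
    contraction (single w c) = c • contractWord w := by
  rw [← mul_one c, ← smul_single', ← basis_apply, map_smul, contraction,
    Module.Basis.constr_basis, mul_one]

theorem contraction_one : contraction 1 = 0 := by
  rw [one_def, contraction_single, contractWord, FreeMonoid.casesOn_one, smul_zero]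

theorem contraction_fgen_true_mul (z : FAlg Bool) : contraction (fgen true * z) = 0 := by
  induction z using induction_linear with
  | zero => simp
  | add a b ha hb => rw [mul_add, map_add, ha, hb, add_zero]
  | single w c => simp [fgen_mul_single, contraction_single, contractWord]

theorem contraction_fgen_false_mul (z : FAlg Bool) :
    contraction (fgen false * z) = fgen true * z := by
  induction z using induction_linear with
  | zero => simp
  | add a b ha hb => rw [mul_add, map_add, ha, hb, mul_add]
  | single w c => simp [fgen_mul_single, contraction_single, contractWord]

variable {D : FAlg Bool →ₗ[ℤ] FAlg Bool} (hD : IsLeibniz degE D)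
include hD

theorem IsLeibniz.map_fgen_true_mul (he₁ : D (fgen true) = fgen false) (z : FAlg Bool) :
    D (fgen true * z) = fgen false * z - fgen true * D z := by
  rw [hD.map_fgen_mul, he₁, sub_eq_add_neg]
  simp [sgn, degE]

theorem IsLeibniz.map_fgen_false_mul (he₂ : D (fgen false) = 0) (z : FAlg Bool) :
    D (fgen false * z) = fgen false * D z := by
  rw [hD.map_fgen_mul, he₂]
  simp [sgn, degE]

theorem augmentation_map_eq_zero (he₁ : D (fgen true) = fgen false)
    (he₂ : D (fgen false) = 0) (a : FAlg Bool) : augmentation (D a) = 0 := by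
  induction a using FAlg.induction_on_fgen_mul with
  | smul_one c => rw [map_smul, hD.map_one, smul_zero, map_zero]
  | fgen_mul x z =>
    cases x
    · rw [hD.map_fgen_false_mul he₂, augmentation_fgen_mul]
    · rw [hD.map_fgen_true_mul he₁, map_sub, augmentation_fgen_mul, augmentation_fgen_mul,
        sub_zero]
  | add a b ha hb => rw [map_add, map_add, ha, hb, add_zero]

theorem contraction_homotopy (he₁ : D (fgen true) = fgen false)
    (he₂ : D (fgen false) = 0) (a : FAlg Bool) :
    D (contraction a) + contraction (D a) + augmentation a • 1 = a := by
  induction a using FAlg.induction_on_fgen_mul with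
  | smul_one c =>
    rw [map_smul contraction, contraction_one, smul_zero, map_zero, map_smul D, hD.map_one,
      smul_zero, map_zero, map_smul, augmentation_one, smul_eq_mul, mul_one, zero_add, zero_add]
  | fgen_mul x z =>
    cases x
    · rw [contraction_fgen_false_mul, hD.map_fgen_true_mul he₁,
        hD.map_fgen_false_mul he₂, contraction_fgen_false_mul, augmentation_fgen_mul,
        zero_smul, add_zero, sub_add_cancel]
    · rw [contraction_fgen_true_mul, hD.map_fgen_true_mul he₁, map_sub,
        contraction_fgen_false_mul, contraction_fgen_true_mul, augmentation_fgen_mul]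
      simp
  | add a b ha hb =>
    rw [map_add, map_add, map_add, map_add, map_add, add_smul]
    conv_rhs => rw [← ha, ← hb]
    abel

end Contraction

theorem E_homology_general
    (D : FAlg Bool →ₗ[ℤ] FAlg Bool)
    (hLeib : IsLeibniz degE D)
    (he1 : D (fgen true) = fgen false) (he2 : D (fgen false) = 0) :
    (∀ a : FAlg Bool, Homog degE 0 a → D a = 0 →
        ∃ (c : ℤ) (b : FAlg Bool), a = c • (1 : FAlg Bool) + D b) ∧
    (∀ c : ℤ, (∃ b, D b = c • (1 : FAlg Bool)) → c = 0) ∧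
    (∀ d : ℤ, 0 < d → ∀ a : FAlg Bool, Homog degE d a → D a = 0 →
        ∃ b, a = D b) := by
  have homotopy := contraction_homotopy hLeib he1 he2
  refine ⟨fun a _ hDa => ⟨augmentation a, contraction a, ?_⟩, fun c ⟨b, hb⟩ => ?_,
    fun d hd a ha hDa => ⟨contraction a, ?_⟩⟩
  · simpa [hDa, add_comm] using (homotopy a).symm
  · have := augmentation_map_eq_zero hLeib he1 he2 b
    rwa [hb, map_smul, augmentation_one, smul_eq_mul, mul_one] at this
  · simpa [hDa, augmentation_eq_zero_of_homog ha hd.ne'] using (homotopy a).symm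

/-- the DGA `E` on two generators `e₁, e₂` with `deg e₁ = 1`,
`deg e₂ = 0`, `∂e₁ = e₂`, `∂e₂ = 0` has homology concentrated in degree 0 and
isomorphic to ℤ, generated by the class of `1`: every degree-0 cycle is an
integer multiple of `1` plus a boundary, `c • 1` is a boundary only for
`c = 0`, and every cycle of positive degree is a boundary. -/
theorem E_homology
    (D : FAlg Bool →ₗ[ℤ] FAlg Bool)
    (hLeib : IsLeibniz degE D) (hLow : LowersDeg degE D)
    (he1 : D (fgen true) = fgen false) (he2 : D (fgen false) = 0) :
    (∀ a : FAlg Bool, Homog degE 0 a → D a = 0 →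
        ∃ (c : ℤ) (b : FAlg Bool), a = c • (1 : FAlg Bool) + D b) ∧
    (∀ c : ℤ, (∃ b, D b = c • (1 : FAlg Bool)) → c = 0) ∧
    (∀ d : ℤ, 0 < d → ∀ a : FAlg Bool, Homog degE d a → D a = 0 →
        ∃ b, a = D b) :=
  E_homology_general D hLeib he1 he2
end
end

section
/- With notation as for the degree-1 generators, define degree-2 generators a₂₂(x,y) with ∂a₂₂(x,y) = μ a₁₂(u⁻ₓ, y) + a₁₂(u⁺ₓ, y) − a₁₁(u⁻ₓ, oₓ) a₁₂(oₓ, y) + a₂₁(x, u⁻ᵧ) + μ a₂₁(x, u⁺ᵧ) − a₂₁(x, oᵧ) a₁₁(oᵧ, u⁻ᵧ). Then ∂(∂a₂₂(x,y)) = 0. -/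
/- The free unital associative algebra over the Laurent polynomial ring
`ℤ[μ, μ⁻¹]` (with `μ` central) on a type `X` of generators, realized as the
monoid algebra of the free monoid on `X`. -/
noncomputable section

abbrev LR : Type := LaurentPolynomial ℤ

abbrev LAlg (X : Type) : Type := MonoidAlgebra LR (FreeMonoid X)

/-- The central invertible scalar `μ`. -/
def μL {X : Type} : LAlg X := algebraMap LR (LAlg X) (LaurentPolynomial.T 1)

/-- An element is homogeneous of degree `d` if every word in its support has
degree `d`. -/
def LHomog {X : Type} (deg : X → ℤ) (d : ℤ) (a : LAlg X) : Prop :=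
  ∀ w ∈ a.coeff.support, wdeg deg w = d

/-- The signed Leibniz rule for a linear map on `LAlg X`. -/
def LLeibniz {X : Type} (deg : X → ℤ) (D : LAlg X →ₗ[LR] LAlg X) : Prop :=
  ∀ (d : ℤ) (v w : LAlg X), LHomog deg d v →
    D (v * w) = D v * w + sgn d • (v * D w)

/-!
Write `Lₓ g = μ g(u⁻ₓ) + g(u⁺ₓ) − a₁₁(u⁻ₓ, oₓ) g(oₓ)` and
`Rᵧ g = g(u⁻ᵧ) + μ g(u⁺ᵧ) − g(oᵧ) a₁₁(oᵧ, u⁻ᵧ)` for `g` a family indexed by sheets (`leftComb`, `rightComb`).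
Then `∂a₂₁(x, i) = Lₓ a₁₁(·, i)`, `∂a₁₂(i, y) = −Rᵧ a₁₁(i, ·)` and
`∂a₂₂(x, y) = Lₓ a₁₂(·, y) + Rᵧ a₂₁(x, ·)`. Since `∂a₁₁ = 0`, the Leibniz rule lets `∂`
commute with `Lₓ` and `Rᵧ`, so `∂∂a₂₂(x, y) = −Lₓ Rᵧ a₁₁ + Rᵧ Lₓ a₁₁`, which vanishes
because left and right multiplications commute (associativity, `μ` central).
-/

theorem sgn_zero : sgn 0 = 1 := by
  simp [sgn]

theorem μL_mul {X : Type} (v : LAlg X) : μL * v = (LaurentPolynomial.T 1 : LR) • v :=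
  (Algebra.smul_def _ v).symm

namespace LLeibniz

variable {X : Type} {deg : X → ℤ} {D : LAlg X →ₗ[LR] LAlg X}

theorem map_mul_of_cycle_left (hL : LLeibniz deg D) {a : LAlg X} (ha : LHomog deg 0 a)
    (hDa : D a = 0) (w : LAlg X) : D (a * w) = a * D w := by
  rw [hL 0 a w ha, hDa, zero_mul, zero_add, sgn_zero, one_smul]

theorem map_mul_of_cycle_right (hL : LLeibniz deg D) {d : ℤ} {v w : LAlg X}
    (hv : LHomog deg d v) (hDw : D w = 0) : D (v * w) = D v * w := by
  rw [hL d v w hv, hDw, mul_zero, smul_zero, add_zero]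

end LLeibniz

section Comb

variable {R A ι : Type*} [CommRing R] [Ring A] [Algebra R A]

def leftComb (μ : R) (um up o : ι) (c : A) (g : ι → A) : A :=
  μ • g um + g up - c * g o

def rightComb (μ : R) (um up o : ι) (c : A) (g : ι → A) : A :=
  g um + μ • g up - g o * c

theorem map_leftComb {μ : R} {um up o : ι} {c : A} (f : A →ₗ[R] A) {g : ι → A}
    (hc : f (c * g o) = c * f (g o)) :
    f (leftComb μ um up o c g) = leftComb μ um up o c (fun i => f (g i)) := by
  rw [leftComb, leftComb, map_sub, map_add, map_smul, hc]

theorem map_rightComb {μ : R} {um up o : ι} {c : A} (f : A →ₗ[R] A) {g : ι → A}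
    (hc : f (g o * c) = f (g o) * c) :
    f (rightComb μ um up o c g) = rightComb μ um up o c (fun i => f (g i)) := by
  rw [rightComb, rightComb, map_sub, map_add, map_smul, hc]

variable (μ : R) (um up o : ι) (c : A)

theorem leftComb_neg (g : ι → A) :
    leftComb μ um up o c (fun i => -g i) = -leftComb μ um up o c g := by
  simp only [leftComb, smul_neg, mul_neg]
  abel

theorem leftComb_rightComb_comm (um' up' o' : ι) (c' : A) (F : ι → ι → A) :
    leftComb μ um up o c (fun i => rightComb μ um' up' o' c' (F i)) =
      rightComb μ um' up' o' c' (fun j => leftComb μ um up o c (fun i => F i j)) := by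
  simp only [leftComb, rightComb, smul_add, smul_sub, mul_add, mul_sub, add_mul, sub_mul,
    smul_mul_assoc, mul_smul_comm, mul_assoc]
  abel

end Comb

theorem roseman_d_squared_a22_general
    {X S C : Type} (deg : X → ℤ) (o up um : C → S)
    (D : LAlg X →ₗ[LR] LAlg X) (hL : LLeibniz deg D)
    (A11 : S → S → LAlg X) (A21 : C → S → LAlg X) (A12 : S → C → LAlg X)
    (h11 : ∀ i j, LHomog deg 0 (A11 i j))
    (h21 : ∀ x i, LHomog deg 1 (A21 x i))
    (hD11 : ∀ i j, D (A11 i j) = 0)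
    (hD21 : ∀ x i, D (A21 x i) =
      μL * A11 (um x) i + A11 (up x) i - A11 (um x) (o x) * A11 (o x) i)
    (hD12 : ∀ i x, D (A12 i x) =
      -(A11 i (um x)) - μL * A11 i (up x) + A11 i (o x) * A11 (o x) (um x))
    (A22 : C → C → LAlg X)
    (hD22 : ∀ x y, D (A22 x y) =
      μL * A12 (um x) y + A12 (up x) y - A11 (um x) (o x) * A12 (o x) y
        + A21 x (um y) + μL * A21 x (up y) - A21 x (o y) * A11 (o y) (um y))
    :
    ∀ (x y : C), D (D (A22 x y)) = 0 := by
  intro x y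
  set L := leftComb (LaurentPolynomial.T 1 : LR) (um x) (up x) (o x) (A11 (um x) (o x))
  set R := rightComb (LaurentPolynomial.T 1 : LR) (um y) (up y) (o y) (A11 (o y) (um y))
  have hA22 : D (A22 x y) = L (fun k => A12 k y) + R (A21 x) := by
    rw [hD22, μL_mul, μL_mul]
    simp only [L, R, leftComb, rightComb]
    abel
  have hA21 : ∀ i, D (A21 x i) = L (fun k => A11 k i) := by
    intro i
    rw [hD21, μL_mul]
    simp only [L, leftComb]
  have hA12 : ∀ i, D (A12 i y) = -R (A11 i) := by
    intro i
    rw [hD12, μL_mul]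
    simp only [R, rightComb]
    abel
  calc D (D (A22 x y))
      = L (fun k => D (A12 k y)) + R (fun k => D (A21 x k)) := by
        rw [hA22, map_add, map_leftComb _ (hL.map_mul_of_cycle_left (h11 _ _) (hD11 _ _) _),
          map_rightComb _ (hL.map_mul_of_cycle_right (h21 _ _) (hD11 _ _))]
    _ = -L (fun k => R (A11 k)) + R (fun k => L (fun i => A11 i k)) := by
        simp only [hA12, hA21, L, leftComb_neg]
    _ = 0 := by
        simp only [L, R]
        rw [leftComb_rightComb_comm, neg_add_cancel]

/-- with the conventions of the Roseman DGA, the degree-2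
generators `a₂₂(x,y)` with
`∂a₂₂(x,y) = μ a₁₂(u⁻ₓ,y) + a₁₂(u⁺ₓ,y) − a₁₁(u⁻ₓ,oₓ) a₁₂(oₓ,y)
 + a₂₁(x,u⁻ᵧ) + μ a₂₁(x,u⁺ᵧ) − a₂₁(x,oᵧ) a₁₁(oᵧ,u⁻ᵧ)`
satisfy `∂(∂a₂₂(x,y)) = 0`. -/
theorem roseman_d_squared_a22
    {X S C : Type} (deg : X → ℤ) (o up um : C → S)
    (D : LAlg X →ₗ[LR] LAlg X) (hL : LLeibniz deg D)
    (A11 : S → S → LAlg X) (A21 : C → S → LAlg X) (A12 : S → C → LAlg X)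
    (h11 : ∀ i j, LHomog deg 0 (A11 i j))
    (h21 : ∀ x i, LHomog deg 1 (A21 x i))
    (h12 : ∀ i x, LHomog deg 1 (A12 i x))
    (hdiag : ∀ i, A11 i i = 1 + μL)
    (hD11 : ∀ i j, D (A11 i j) = 0)
    (hD21 : ∀ x i, D (A21 x i) =
      μL * A11 (um x) i + A11 (up x) i - A11 (um x) (o x) * A11 (o x) i)
    (hD12 : ∀ i x, D (A12 i x) =
      -(A11 i (um x)) - μL * A11 i (up x) + A11 i (o x) * A11 (o x) (um x))
    (A22 : C → C → LAlg X)
    (h22 : ∀ x y, LHomog deg 2 (A22 x y))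
    (hD22 : ∀ x y, D (A22 x y) =
      μL * A12 (um x) y + A12 (up x) y - A11 (um x) (o x) * A12 (o x) y
        + A21 x (um y) + μL * A21 x (up y) - A21 x (o y) * A11 (o y) (um y))
    :
    ∀ (x y : C), D (D (A22 x y)) = 0 :=
  roseman_d_squared_a22_general deg o up um D hL A11 A21 A12 h11 h21 hD11 hD21 hD12 A22 hD22
end
end

section
/- If two characteristic algebras A₁/I₁ and A₂/I₂ over ℤ are equivalent (in the sense of becoming tamely isomorphic after adjoining free generators with no relations), then for any prime p, the numbers of unital algebra homomorphisms (Aᵢ/Iᵢ) ⊗ ℤ/pℤ → ℤ/pℤ differ exactly by a factor of a power of p, namely p^{d₁} · N₁ = p^{d₂} · N₂ where dᵢ is the number of free generators adjoined to Aᵢ. -/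
/- Free unital associative ℤ-algebra on a type `X` of generators,
realized as the monoid algebra of the free monoid on `X`. -/
noncomputable section

/-- A differential graded algebra: a free graded ℤ-algebra on finitely many
generators with a degree `-1` differential satisfying the signed Leibniz rule
and `∂ ∘ ∂ = 0`. -/
structure DGA where
  n : ℕ
  deg : Fin n → ℤ
  D : FAlg (Fin n) →ₗ[ℤ] FAlg (Fin n)
  leibniz : IsLeibniz deg D
  lowers : LowersDeg deg D
  dsq : ∀ a, D (D a) = 0

/-- An elementary isomorphism: a graded chain algebra map sending one generator
`aᵢ` to `α aᵢ + v` (`α` a unit) and fixing all other generators. -/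
def IsElementary (A B : DGA) (φ : FAlg (Fin A.n) →ₐ[ℤ] FAlg (Fin B.n)) : Prop :=
  ∃ hn : A.n = B.n,
    (∀ (d : ℤ) (v : FAlg (Fin A.n)), Homog A.deg d v → Homog B.deg d (φ v)) ∧
    (∀ a, φ (A.D a) = B.D (φ a)) ∧
    ∃ i : Fin A.n,
      (∃ (α : (FAlg (Fin B.n))ˣ) (v : FAlg (Fin B.n)),
        φ (fgen i) = (α : FAlg (Fin B.n)) * fgen (Fin.cast hn i) + v) ∧
      ∀ j : Fin A.n, j ≠ i → φ (fgen j) = fgen (Fin.cast hn j)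

def ElemRel (A B : DGA) : Prop := ∃ φ, IsElementary A B φ

/-- A tame isomorphism is a finite composition of elementary isomorphisms. -/
def TameIso : DGA → DGA → Prop := Relation.ReflTransGen ElemRel

def stabEmbFin (A B : DGA) (hn : B.n = A.n + 2) : Fin A.n → Fin B.n :=
  fun j => Fin.cast hn.symm (Fin.castAdd 2 j)

/-- The inclusion of the free algebra induced by the inclusion of generators. -/
def stabMap (A B : DGA) (hn : B.n = A.n + 2) : FAlg (Fin A.n) → FAlg (Fin B.n) :=
  MonoidAlgebra.mapDomain (⇑(FreeMonoid.map (stabEmbFin A B hn)))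

def stabE1 (A B : DGA) (hn : B.n = A.n + 2) : Fin B.n :=
  Fin.cast hn.symm (⟨A.n, by omega⟩ : Fin (A.n + 2))

def stabE2 (A B : DGA) (hn : B.n = A.n + 2) : Fin B.n :=
  Fin.cast hn.symm (⟨A.n + 1, by omega⟩ : Fin (A.n + 2))

/-- `B` is the degree-`i` algebraic stabilization of `A`: it is obtained by
adjoining two new free generators `e₁, e₂` with `deg e₁ = i + 1`, `deg e₂ = i`,
`∂e₁ = e₂`, `∂e₂ = 0`, the differential extending that of `A`. -/
def IsStabilizationWith (A : DGA) (i : ℤ) (B : DGA) (hn : B.n = A.n + 2) : Prop :=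
  (∀ j, B.deg (stabEmbFin A B hn j) = A.deg j) ∧
  B.deg (stabE1 A B hn) = i + 1 ∧
  B.deg (stabE2 A B hn) = i ∧
  (∀ a, B.D (stabMap A B hn a) = stabMap A B hn (A.D a)) ∧
  B.D (fgen (stabE1 A B hn)) = fgen (stabE2 A B hn) ∧
  B.D (fgen (stabE2 A B hn)) = 0

def IsStabilization (A : DGA) (i : ℤ) (B : DGA) : Prop :=
  ∃ hn : B.n = A.n + 2, IsStabilizationWith A i B hn

/-- `B` is obtained from `A` by finitely many algebraic stabilizations. -/
def StabChain : DGA → DGA → Prop :=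
  Relation.ReflTransGen (fun P Q => ∃ i : ℤ, IsStabilization P i Q)

/-- Two DGAs are stably tame isomorphic if after finitely many stabilizations
of each they become tame isomorphic. -/
def StableTameIso (A B : DGA) : Prop :=
  ∃ A' B', StabChain A A' ∧ StabChain B B' ∧ TameIso A' B'

/-- The relation whose `RingQuot` is the quotient of `A` by the two-sided ideal
generated by the differentials of the generators: the characteristic algebra. -/
def charRel (A : DGA) (a b : FAlg (Fin A.n)) : Prop :=
  b = 0 ∧ ∃ i : Fin A.n, a = A.D (fgen i)

/-- The characteristic algebra `C(A) = A / I`, `I` the two-sided ideal generated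
by the `∂aᵢ`. -/
abbrev CharAlg (A : DGA) : Type := RingQuot (charRel A)

/-- The characteristic algebra with `d` extra free generators adjoined (and no
new relations): the free algebra on `A.n + d` generators modulo the two-sided
ideal generated by the (images of the) differentials of the original generators. -/
def charExtRel (A : DGA) (d : ℕ) (a b : FAlg (Fin (A.n + d))) : Prop :=
  b = 0 ∧ ∃ i : Fin A.n,
    a = MonoidAlgebra.mapDomain (⇑(FreeMonoid.map (Fin.castAdd d))) (A.D (fgen i))

abbrev CharExtAlg (A : DGA) (d : ℕ) : Type := RingQuot (charExtRel A d)

/-! A ring hom out of `A/I` is an assignment of values to the generators of `A` killing every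
`∂aᵢ`. After adjoining `d` free generators with no relations, their values are unconstrained, so
the ring homs from the extended algebra to `ℤ/p` number `p^d · N`; a ring isomorphism between the
two extended algebras identifies these counts. -/

section FreeAlgebra

variable {X Y M : Type} [Ring M]

def FAlg.lift : (X → M) ≃ (FAlg X →+* M) :=
  FreeMonoid.lift.trans <|
    (MonoidAlgebra.lift ℤ M (FreeMonoid X)).trans (RingHom.equivIntAlgHom _ _).symm

theorem FAlg.lift_fgen (g : X → M) (x : X) : FAlg.lift g (fgen x) = g x := by
  change MonoidAlgebra.lift ℤ M (FreeMonoid X) (FreeMonoid.lift g) (fgen x) = g x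
  simp [fgen]

theorem FAlg.mapDomain_fgen (e : X → Y) (x : X) :
    MonoidAlgebra.mapDomain (FreeMonoid.map e) (fgen x) = fgen (e x) := by
  simp [fgen]

theorem FAlg.ringHom_ext {f g : FAlg X →+* M} (h : ∀ x, f (fgen x) = g (fgen x)) : f = g :=
  FAlg.lift.symm.injective (funext h)

theorem FAlg.lift_mapDomain (e : X → Y) (g : Y → M) (a : FAlg X) :
    FAlg.lift g (MonoidAlgebra.mapDomain (FreeMonoid.map e) a) = FAlg.lift (g ∘ e) a := by
  change (FAlg.lift g).comp (MonoidAlgebra.mapDomainRingHom ℤ (FreeMonoid.map e)) a = _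
  congr 1
  refine FAlg.ringHom_ext fun x => ?_
  simp [FAlg.mapDomain_fgen, FAlg.lift_fgen]

end FreeAlgebra

section CharacteristicAlgebra

variable {M : Type} [Ring M] (A : DGA) (d : ℕ)

def charAlgLift :
    {g : Fin A.n → M // ∀ i, FAlg.lift g (A.D (fgen i)) = 0} ≃ (CharAlg A →+* M) :=
  (FAlg.lift.subtypeEquiv fun g => by simp [charRel]).trans RingQuot.lift

def charExtAlgLift :
    {g : Fin (A.n + d) → M // ∀ i, FAlg.lift (g ∘ Fin.castAdd d) (A.D (fgen i)) = 0}
      ≃ (CharExtAlg A d →+* M) :=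
  (FAlg.lift.subtypeEquiv fun g => by simp [charExtRel, FAlg.lift_mapDomain]).trans
    RingQuot.lift

def charExtAlgHomEquiv : (CharAlg A →+* M) × (Fin d → M) ≃ (CharExtAlg A d →+* M) :=
  ((charAlgLift A).symm.prodCongr (Equiv.refl _)).trans <|
    Equiv.prodSubtypeFstEquivSubtypeProd.symm.trans <|
      ((Fin.appendEquiv A.n d).subtypeEquiv fun gh => by
        rw [show Fin.appendEquiv A.n d gh ∘ Fin.castAdd d = gh.1 from
          funext (Fin.append_left gh.1 gh.2)]).trans
        (charExtAlgLift A d)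

theorem card_charExtAlg_ringHom :
    Nat.card (CharExtAlg A d →+* M) = Nat.card M ^ d * Nat.card (CharAlg A →+* M) := by
  rw [← Nat.card_congr (charExtAlgHomEquiv (M := M) A d), Nat.card_prod, Nat.card_fun,
    Nat.card_fin, mul_comm]

end CharacteristicAlgebra

theorem Nat.card_ringHom_congr_left {R S T : Type*} [Ring R] [Ring S] [Ring T] (φ : R ≃+* S) :
    Nat.card (R →+* T) = Nat.card (S →+* T) :=
  Nat.card_congr <| (RingHom.equivIntAlgHom _ _).trans <|
    (φ.toIntAlgEquiv.arrowCongr AlgEquiv.refl).trans (RingHom.equivIntAlgHom _ _).symm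

theorem char_equivalence_hom_counts_general (A₁ A₂ : DGA) (d₁ d₂ : ℕ)
    (p : ℕ)
    (h : Nonempty (CharExtAlg A₁ d₁ ≃+* CharExtAlg A₂ d₂)) :
    p ^ d₁ * Nat.card (CharAlg A₁ →+* ZMod p)
      = p ^ d₂ * Nat.card (CharAlg A₂ →+* ZMod p) := by
  obtain ⟨φ⟩ := h
  simpa only [card_charExtAlg_ringHom, Nat.card_zmod] using
    Nat.card_ringHom_congr_left (T := ZMod p) φ

/-- if the characteristic algebras `A₁/I₁` and `A₂/I₂` of two
DGAs are equivalent, i.e. become (tamely) isomorphic after adjoining `d₁`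
resp. `d₂` free generators with no relations, then for any prime `p` the
numbers of unital algebra homomorphisms `(Aᵢ/Iᵢ) ⊗ ℤ/pℤ → ℤ/pℤ` (equivalently,
ring homomorphisms `Aᵢ/Iᵢ → ℤ/pℤ`) satisfy `p^{d₁} · N₁ = p^{d₂} · N₂`. -/
theorem char_equivalence_hom_counts (A₁ A₂ : DGA) (d₁ d₂ : ℕ)
    (p : ℕ) [Fact p.Prime]
    (h : Nonempty (CharExtAlg A₁ d₁ ≃+* CharExtAlg A₂ d₂)) :
    p ^ d₁ * Nat.card (CharAlg A₁ →+* ZMod p)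
      = p ^ d₂ * Nat.card (CharAlg A₂ →+* ZMod p) :=
  char_equivalence_hom_counts_general A₁ A₂ d₁ d₂ p h
end
end
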